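/- Let n ≥ 1 be an integer, m > 0, H < 0 and β < 0. Let a(t) = exp(H t^β) for t > 0 and define the curved mass c(t) = m² + (n/2 − n²/4)(ȧ(t)/a(t))² − (n/2)(ä(t)/a(t)). Then: (i) ȧ(t) > 0 for all t > 0; and (ii) there exists t₀ > 0 such that for all t ≥ t₀ one has c(t) > 0 and ċ(t) ≤ 0. -/

import Mathlib

/-!
Writing `a = exp ∘ φ` with `φ t = H t^β`, one has `ȧ/a = φ'` and `ä/a = φ'' + φ'²`, so the curved
mass is `m² - (n/2)² φ'² - (n/2) φ''`. For `φ' = Hβ t^{β-1}` with `Hβ > 0` this is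
`m² + B t^{β-2} + A t^{2β-2}` with `B > 0`; since `β < 0` the power `t^{β-2}` dominates
both this expression and its derivative as `t → ∞`, which fixes their signs.
-/

open Filter Real Topology

section ExpComp

variable {φ φ' : ℝ → ℝ} {t φ'' : ℝ}

lemma deriv_deriv_exp_comp (hφ : ∀ᶠ x in 𝓝 t, HasDerivAt φ (φ' x) x)
    (hφ' : HasDerivAt φ' φ'' t) :
    deriv (deriv fun x => exp (φ x)) t = (φ'' + φ' t ^ 2) * exp (φ t) := by
  have hderiv : deriv (fun x => exp (φ x)) =ᶠ[𝓝 t] fun x => φ' x * exp (φ x) := by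
    filter_upwards [hφ] with x hx
    rw [hx.exp.deriv, mul_comm]
  rw [hderiv.deriv_eq]
  refine (hφ'.mul hφ.self_of_nhds.exp).deriv.trans ?_
  ring

lemma curvedMass_exp_comp (ν m : ℝ) (hφ : ∀ᶠ x in 𝓝 t, HasDerivAt φ (φ' x) x)
    (hφ' : HasDerivAt φ' φ'' t) :
    m ^ 2 + (ν / 2 - ν ^ 2 / 4) * (deriv (fun x => exp (φ x)) t / exp (φ t)) ^ 2
        - ν / 2 * (deriv (deriv fun x => exp (φ x)) t / exp (φ t))
      = m ^ 2 - (ν / 2) ^ 2 * φ' t ^ 2 - ν / 2 * φ'' := by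
  rw [deriv_deriv_exp_comp hφ hφ', hφ.self_of_nhds.exp.deriv]
  field_simp
  ring

end ExpComp

section Rpow

variable {t : ℝ}

lemma hasDerivAt_const_mul_rpow (A p : ℝ) (ht : 0 < t) :
    HasDerivAt (fun x => A * x ^ p) (A * p * t ^ (p - 1)) t := by
  simpa only [mul_assoc] using (hasDerivAt_rpow_const (Or.inl ht.ne')).const_mul A

lemma hasDerivAt_const_add_mul_rpow_add_mul_rpow (C A B p q : ℝ) (ht : 0 < t) :
    HasDerivAt (fun x => C + A * x ^ p + B * x ^ q)
      (A * p * t ^ (p - 1) + B * q * t ^ (q - 1)) t := by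
  refine (((hasDerivAt_const t C).add (hasDerivAt_const_mul_rpow A p ht)).add
    (hasDerivAt_const_mul_rpow B q ht)).congr_deriv ?_
  rw [zero_add]

lemma curvedMass_exp_const_mul_rpow (ν m H β : ℝ) (ht : 0 < t) :
    m ^ 2 + (ν / 2 - ν ^ 2 / 4) * (deriv (fun x => exp (H * x ^ β)) t / exp (H * t ^ β)) ^ 2
        - ν / 2 * (deriv (deriv fun x => exp (H * x ^ β)) t / exp (H * t ^ β))
      = m ^ 2 + ν / 2 * (H * β) * (1 - β) * t ^ (β - 2)
        + -(ν / 2 * (H * β)) ^ 2 * t ^ (2 * β - 2) := by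
  have hφ : ∀ᶠ x in 𝓝 t, HasDerivAt (fun x => H * x ^ β) (H * β * x ^ (β - 1)) x := by
    filter_upwards [Ioi_mem_nhds ht] with x hx
    exact hasDerivAt_const_mul_rpow H β hx
  have hφ' := hasDerivAt_const_mul_rpow (H * β) (β - 1) ht
  have hsq : (t ^ (β - 1)) ^ 2 = t ^ (2 * β - 2) := by
    rw [← rpow_mul_natCast ht.le]
    ring_nf
  rw [curvedMass_exp_comp ν m hφ hφ', show β - 1 - 1 = β - 2 by ring, mul_pow, hsq]
  ring

lemma eventually_pos_mul_rpow_add_mul_rpow {A B p q : ℝ} (hB : 0 < B) (hqp : q < p) :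
    ∀ᶠ x in atTop, 0 < B * x ^ p + A * x ^ q := by
  have hlim : Tendsto (fun x : ℝ => B + A * x ^ (q - p)) atTop (𝓝 B) := by
    have h := (tendsto_rpow_neg_atTop (sub_pos.2 hqp)).const_mul A
    simpa only [neg_sub, mul_zero, add_zero] using h.const_add B
  filter_upwards [hlim.eventually (eventually_gt_nhds hB), eventually_gt_atTop 0] with x hx hx0
  have hsplit : B * x ^ p + A * x ^ q = x ^ p * (B + A * x ^ (q - p)) := by
    rw [mul_add, mul_left_comm, ← rpow_add hx0, add_sub_cancel, mul_comm]
  rw [hsplit]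
  exact mul_pos (rpow_pos_of_pos hx0 p) hx

end Rpow

theorem stmt_16_general (n : ℕ) (hn : 1 ≤ n) (m H β : ℝ) (hH : H < 0)
    (hβ : β < 0)
    (a c : ℝ → ℝ) (ha : a = fun t => Real.exp (H * t ^ β))
    (hc : c = fun t => m ^ 2
      + ((n : ℝ) / 2 - (n : ℝ) ^ 2 / 4) * (deriv a t / a t) ^ 2
      - ((n : ℝ) / 2) * (deriv (deriv a) t / a t)) :
    (∀ t : ℝ, 0 < t → 0 < deriv a t) ∧
    (∃ t₀ : ℝ, 0 < t₀ ∧ ∀ t : ℝ, t₀ ≤ t → 0 < c t ∧ deriv c t ≤ 0) := by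
  subst ha
  have hk : 0 < H * β := mul_pos_of_neg_of_neg hH hβ
  have hν : (0 : ℝ) < n := by exact_mod_cast hn
  set B := (n : ℝ) / 2 * (H * β) * (1 - β)
  set A := -((n : ℝ) / 2 * (H * β)) ^ 2
  have hB : 0 < B := mul_pos (by positivity) (by linarith)
  have hcg : ∀ x ∈ Set.Ioi (0 : ℝ), c x = m ^ 2 + B * x ^ (β - 2) + A * x ^ (2 * β - 2) :=
    fun x hx => by rw [hc]; exact curvedMass_exp_const_mul_rpow n m H β hx
  refine ⟨fun t ht => ?_, ?_⟩
  · rw [((hasDerivAt_const_mul_rpow H β ht).exp).deriv]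
    positivity
  have hpos := eventually_pos_mul_rpow_add_mul_rpow (A := A) hB (by linarith : 2 * β - 2 < β - 2)
  have hneg := eventually_pos_mul_rpow_add_mul_rpow (A := -(A * (2 * β - 2)))
    (by nlinarith : 0 < -(B * (β - 2))) (by linarith : 2 * β - 2 - 1 < β - 2 - 1)
  obtain ⟨t₀, ht₀⟩ := eventually_atTop.1 (hpos.and (hneg.and (eventually_gt_atTop 0)))
  refine ⟨t₀, (ht₀ t₀ le_rfl).2.2, fun t ht => ?_⟩
  obtain ⟨hpos_t, hneg_t, ht0⟩ := ht₀ t ht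
  rw [hcg t ht0, (eventuallyEq_of_mem (Ioi_mem_nhds ht0) hcg).deriv_eq,
    (hasDerivAt_const_add_mul_rpow_add_mul_rpow _ _ _ _ _ ht0).deriv]
  constructor
  · linarith [sq_nonneg m]
  · linarith

/-- for the scale factor `a(t) = exp(H t^β)` with `H < 0` and `β < 0`,
the universe is expanding, and the curved mass is eventually positive with
non-positive derivative. -/
theorem stmt_16 (n : ℕ) (hn : 1 ≤ n) (m H β : ℝ) (hm : 0 < m) (hH : H < 0)
    (hβ : β < 0)
    (a c : ℝ → ℝ) (ha : a = fun t => Real.exp (H * t ^ β))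
    (hc : c = fun t => m ^ 2
      + ((n : ℝ) / 2 - (n : ℝ) ^ 2 / 4) * (deriv a t / a t) ^ 2
      - ((n : ℝ) / 2) * (deriv (deriv a) t / a t)) :
    (∀ t : ℝ, 0 < t → 0 < deriv a t) ∧
    (∃ t₀ : ℝ, 0 < t₀ ∧ ∀ t : ℝ, t₀ ≤ t → 0 < c t ∧ deriv c t ≤ 0) :=
  stmt_16_general n hn m H β hH hβ a c ha hc
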